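/- arXiv:0810.5705 — 4 statements merged into one kernel-verified Lean document; each statement's English description precedes it below -/
import Mathlib

section
/- Let X be a p-normed space for 0 < p ≤ 1, i.e. ‖x+y‖^p ≤ ‖x‖^p + ‖y‖^p for all x, y ∈ X. Then for any finite sequence (x_k) in X and any choice of signs ε_k ∈ {-1, 0, 1}, one has the bound E‖∑ ε_k r_k x_k‖^p ≤ 2^{1-p} · 2 · E‖∑ r_k x_k‖^p, where (r_k) are independent uniform ±1 random variables and E denotes expectation. -/
/-!
Write each `α k ∈ {-1, 0, 1}` as `(β k + γ k) / 2` with `β k, γ k = ±1`; then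
`∑ α_k r_k x_k = ½ (∑ β_k r_k x_k + ∑ γ_k r_k x_k)`, and the `p`-triangle inequality bounds
`‖·‖^p` of it by `2^(-p)` times the sum of the two `p`-th powers. Multiplying the signs `r_k` by
the fixed signs `β_k` (or `γ_k`) is a bijection of `{±1}^n`, so both averages equal
`E ‖∑ r_k x_k‖^p`, which gives the bound with constant `2^(1-p)`.
-/

def radSign (b : Bool) : ℝ := if b then 1 else -1

theorem radSign_mul_radSign (a b : Bool) : radSign a * radSign b = radSign (a == b) := by
  cases a <;> cases b <;> norm_num [radSign]

theorem exists_mul_radSign_eq_half_add {a : ℝ} (ha : a = -1 ∨ a = 0 ∨ a = 1) :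
    ∃ β γ : Bool, ∀ u, a * radSign u = (radSign β * radSign u + radSign γ * radSign u) / 2 := by
  rcases ha with rfl | rfl | rfl
  · exact ⟨false, false, fun u => by cases u <;> norm_num [radSign]⟩
  · exact ⟨true, false, fun u => by cases u <;> norm_num [radSign]⟩
  · exact ⟨true, true, fun u => by cases u <;> norm_num [radSign]⟩

theorem Fintype.sum_comp_beq {ι M : Type*} [Fintype ι] [DecidableEq ι] [AddCommMonoid M]
    (b : ι → Bool) (f : (ι → Bool) → M) :
    ∑ s : ι → Bool, f (fun k => b k == s k) = ∑ s, f s :=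
  Equiv.sum_comp (Function.Involutive.toPerm (fun (s : ι → Bool) k => b k == s k)
    fun s => funext fun k => by simp) f

section PNorm

variable {X : Type*} [AddCommGroup X] [Module ℝ X] {p : ℝ} {N : X → ℝ}

theorem rpow_smul_add_le (hN0 : ∀ x, 0 ≤ N x) (hNsmul : ∀ (c : ℝ) (x : X), N (c • x) = |c| * N x)
    (hNp : ∀ x y : X, N (x + y) ^ p ≤ N x ^ p + N y ^ p) (c : ℝ) (y z : X) :
    N (c • (y + z)) ^ p ≤ |c| ^ p * (N y ^ p + N z ^ p) := by
  rw [hNsmul, Real.mul_rpow (abs_nonneg c) (hN0 _)]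
  exact mul_le_mul_of_nonneg_left (hNp y z) (by positivity)

theorem sum_rpow_sum_mul_radSign_smul_le {ι : Type*} [Fintype ι] [DecidableEq ι]
    (hN0 : ∀ x, 0 ≤ N x) (hNsmul : ∀ (c : ℝ) (x : X), N (c • x) = |c| * N x)
    (hNp : ∀ x y : X, N (x + y) ^ p ≤ N x ^ p + N y ^ p)
    (x : ι → X) {α : ι → ℝ} (hα : ∀ k, α k = -1 ∨ α k = 0 ∨ α k = 1) :
    ∑ s : ι → Bool, N (∑ k, (α k * radSign (s k)) • x k) ^ p ≤
      (2 : ℝ) ^ (1 - p) * ∑ s : ι → Bool, N (∑ k, radSign (s k) • x k) ^ p := by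
  choose β γ hβγ using fun k => exists_mul_radSign_eq_half_add (hα k)
  set S := ∑ s : ι → Bool, N (∑ k, radSign (s k) • x k) ^ p
  have hsplit : ∀ s : ι → Bool, ∑ k, (α k * radSign (s k)) • x k =
      (1 / 2 : ℝ) • (∑ k, radSign (β k == s k) • x k + ∑ k, radSign (γ k == s k) • x k) := by
    intro s
    simp only [Finset.smul_sum, ← Finset.sum_add_distrib, smul_smul, ← add_smul,
      hβγ, radSign_mul_radSign]
    exact Finset.sum_congr rfl fun k _ => by ring_nf
  have hhalf : (1 / 2 : ℝ) ^ p * (S + S) = 2 ^ (1 - p) * S := by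
    rw [Real.rpow_sub two_pos, Real.rpow_one, Real.div_rpow one_pos.le two_pos.le, Real.one_rpow]
    ring
  calc ∑ s : ι → Bool, N (∑ k, (α k * radSign (s k)) • x k) ^ p
      ≤ ∑ s : ι → Bool, (1 / 2 : ℝ) ^ p * (N (∑ k, radSign (β k == s k) • x k) ^ p
          + N (∑ k, radSign (γ k == s k) • x k) ^ p) := by
        refine Finset.sum_le_sum fun s _ => ?_
        have h := rpow_smul_add_le hN0 hNsmul hNp (1 / 2 : ℝ)
          (∑ k, radSign (β k == s k) • x k) (∑ k, radSign (γ k == s k) • x k)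
        rwa [abs_of_pos one_half_pos, ← hsplit] at h
    _ = (1 / 2 : ℝ) ^ p * (S + S) := by
        rw [← Finset.mul_sum, Finset.sum_add_distrib,
          Fintype.sum_comp_beq β fun s => N (∑ k, radSign (s k) • x k) ^ p,
          Fintype.sum_comp_beq γ fun s => N (∑ k, radSign (s k) • x k) ^ p]
    _ = 2 ^ (1 - p) * S := hhalf

end PNorm

theorem pnormed_signs_zero_one_general
    {X : Type*} [AddCommGroup X] [Module ℝ X]
    (p : ℝ)
    (N : X → ℝ)
    (hN0 : ∀ x, 0 ≤ N x)
    (hNsmul : ∀ (c : ℝ) (x : X), N (c • x) = |c| * N x)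
    (hNp : ∀ x y : X, N (x + y) ^ p ≤ N x ^ p + N y ^ p)
    (n : ℕ) (x : Fin n → X) (α : Fin n → ℝ)
    (hα : ∀ k, α k = -1 ∨ α k = 0 ∨ α k = 1) :
    (∑ s : Fin n → Bool, N (∑ k, (α k * radSign (s k)) • x k) ^ p) / 2 ^ n ≤
      (2 : ℝ) ^ (1 - p) * 2 *
        ((∑ s : Fin n → Bool, N (∑ k, radSign (s k) • x k) ^ p) / 2 ^ n) := by
  have hS : 0 ≤ ∑ s : Fin n → Bool, N (∑ k, radSign (s k) • x k) ^ p :=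
    Finset.sum_nonneg fun s _ => Real.rpow_nonneg (hN0 _) p
  rw [← mul_div_assoc]
  gcongr
  calc _ ≤ (2 : ℝ) ^ (1 - p) * ∑ s : Fin n → Bool, N (∑ k, radSign (s k) • x k) ^ p :=
        sum_rpow_sum_mul_radSign_smul_le hN0 hNsmul hNp x hα
    _ ≤ _ := by
        rw [mul_assoc]
        gcongr
        linarith

/-- In a `p`-normed space (`0 < p ≤ 1`), for any finite sequence `(x k)` and any
coefficients `α k ∈ {-1, 0, 1}`, one has
`E ‖∑ α_k r_k x_k‖^p ≤ 2^(1-p) · 2 · E ‖∑ r_k x_k‖^p`, where the expectation is over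
independent uniform signs `r_k = ±1`. -/
theorem pnormed_signs_zero_one
    {X : Type*} [AddCommGroup X] [Module ℝ X]
    (p : ℝ) (hp0 : 0 < p) (hp1 : p ≤ 1)
    (N : X → ℝ)
    (hN0 : ∀ x, 0 ≤ N x)
    (hNsmul : ∀ (c : ℝ) (x : X), N (c • x) = |c| * N x)
    (hNp : ∀ x y : X, N (x + y) ^ p ≤ N x ^ p + N y ^ p)
    (n : ℕ) (x : Fin n → X) (α : Fin n → ℝ)
    (hα : ∀ k, α k = -1 ∨ α k = 0 ∨ α k = 1) :
    (∑ s : Fin n → Bool, N (∑ k, (α k * radSign (s k)) • x k) ^ p) / 2 ^ n ≤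
      (2 : ℝ) ^ (1 - p) * 2 *
        ((∑ s : Fin n → Bool, N (∑ k, radSign (s k) • x k) ^ p) / 2 ^ n) :=
  pnormed_signs_zero_one_general p N hN0 hNsmul hNp n x α hα
end

section
/- Let 0 < q < 1. For each n, there exist finite families x_{jj} ∈ M_n (namely x_{jj} = ∑_{k=1}^n e_{jk}, j = 1,...,n) such that ‖(∑_j x_{jj}* x_{jj})^{1/2}‖_{S_q} = n while (∑_j |(x_{jj})_{jj}|^q)^{1/q} = n^{1/q}. Consequently the inequality (∑_j |(x_{jj})_{jj}|^q)^{1/q} ≤ C ‖(∑_j x_{jj}* x_{jj})^{1/2}‖_{S_q} fails for q < 1 with any constant C independent of n. -/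
/-!
Every `x_jj* x_jj` is the all-ones matrix `J`, so `∑_j x_jj* x_jj = n J = J²` has square root `J`.
Since `J / n` is a rank-one projection, `J` has the single nonzero singular value `n` and
`‖J‖_{S_q} = n` for every `q`, whereas all diagonal entries `(x_jj)_{jj}` equal `1`, giving
`n^{1/q}`. For `q < 1` the ratio `n^{1/q} / n = n^{1/q - 1}` is unbounded.
-/

open Matrix
open scoped ComplexOrder

/-- `Matrix.PosSemidef.sqrt` was removed from Mathlib; restored with its old definition. -/
noncomputable def Matrix.PosSemidef.sqrt {n : Type*} [Fintype n] [DecidableEq n] {𝕜 : Type*} [RCLike 𝕜]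
    {A : Matrix n n 𝕜} (hA : A.PosSemidef) : Matrix n n 𝕜 :=
  hA.1.eigenvectorUnitary.1 * diagonal ((↑) ∘ (Real.sqrt ∘ hA.1.eigenvalues)) *
    (star hA.1.eigenvectorUnitary : Matrix n n 𝕜)

/-- The Schatten `q`-(quasi)norm of a complex matrix (`0 < q < ∞`). -/
noncomputable def schattenNorm {n : ℕ} (q : ℝ) (y : Matrix (Fin n) (Fin n) ℂ) : ℝ :=
  (∑ i, Real.sqrt ((Matrix.isHermitian_conjTranspose_mul_self y).eigenvalues i) ^ q) ^ (1 / q)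

namespace Matrix

section RCLike

variable {ι 𝕜 : Type*} [Fintype ι] [DecidableEq ι] [RCLike 𝕜]

open scoped MatrixOrder in
theorem PosSemidef.sqrt_eq_of_mul_self {A B : Matrix ι ι 𝕜} (hA : A.PosSemidef)
    (hB : B.PosSemidef) (hBA : B * B = A) : hA.sqrt = B := by
  subst hBA
  have hsq : (0 : Matrix ι ι 𝕜) ≤ B ^ 2 := by rw [sq]; exact hA.nonneg
  calc hA.sqrt = cfc Real.sqrt (B * B) := by rw [hA.1.cfc_eq]; rfl
    _ = B := by
      rw [← sq, ← cfcₙ_eq_cfc, ← CFC.sqrt_eq_real_sqrt _ hsq, CFC.sqrt_sq B hB.nonneg]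

theorem IsHermitian.eigenvalues_mul_self_eq {H : Matrix ι ι 𝕜} (hH : H.IsHermitian) {c : ℝ}
    (hHH : H * H = c • H) (i : ι) :
    hH.eigenvalues i * hH.eigenvalues i = c * hH.eigenvalues i := by
  have hv : ⇑(hH.eigenvectorBasis i) ≠ 0 :=
    (WithLp.ofLp_eq_zero 2).ne.2 <| hH.eigenvectorBasis.orthonormal.ne_zero i
  have hHv := hH.mulVec_eigenvectorBasis i
  refine smul_left_injective ℝ hv ?_
  calc (hH.eigenvalues i * hH.eigenvalues i) • ⇑(hH.eigenvectorBasis i)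
      = H *ᵥ (H *ᵥ ⇑(hH.eigenvectorBasis i)) := by rw [hHv, mulVec_smul, hHv, smul_smul]
    _ = (c * hH.eigenvalues i) • ⇑(hH.eigenvectorBasis i) := by
      rw [mulVec_mulVec, hHH, smul_mulVec, hHv, smul_smul]

end RCLike

section AllOnes

variable {ι α : Type*}

theorem conjTranspose_of_one [Semiring α] [StarRing α] : (of 1 : Matrix ι ι α)ᴴ = of 1 := by
  ext; simp

variable [Fintype ι]

theorem of_one_mul_of_one [NonAssocSemiring α] :
    (of 1 : Matrix ι ι α) * of 1 = Fintype.card ι • of 1 := by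
  ext; simp [mul_apply]

theorem posSemidef_of_one [CommRing α] [StarRing α] [PartialOrder α] [StarOrderedRing α] :
    (of 1 : Matrix ι ι α).PosSemidef := by
  have hJ : (of 1 : Matrix ι ι α) = vecMulVec 1 (star 1) := by ext; simp [vecMulVec]
  exact hJ ▸ posSemidef_vecMulVec_self_star 1

variable [DecidableEq ι]

def onesRow [Zero α] [One α] (j : ι) : Matrix ι ι α := of fun a _ => if a = j then 1 else 0

theorem onesRow_conjTranspose_mul_self [Semiring α] [StarRing α] (j : ι) :
    (onesRow j : Matrix ι ι α)ᴴ * onesRow j = of 1 := by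
  ext; simp [onesRow, mul_apply]

end AllOnes

end Matrix

theorem Real.sqrt_rpow_eq_of_mul_self_eq {q c t : ℝ} (hq : q ≠ 0) (hc : 0 < c)
    (ht : t * t = c ^ 2 * t) : √t ^ q = t / c ^ 2 * c ^ q := by
  rcases mul_eq_zero.mp (show t * (t - c ^ 2) = 0 by linear_combination ht) with ht0 | htc
  · simp [ht0, Real.zero_rpow hq]
  · rw [sub_eq_zero.mp htc, Real.sqrt_sq hc.le, div_self (by positivity), one_mul]

/-- The hypotheses say that `yᴴ * y` is `c ^ 2` times a projection of rank `r`. -/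
theorem schattenNorm_eq_of_conjTranspose_mul_self {n : ℕ} {q : ℝ} (hq : q ≠ 0)
    {y : Matrix (Fin n) (Fin n) ℂ} {c : ℝ} (hc : 0 < c) (r : ℕ)
    (hsq : (yᴴ * y) * (yᴴ * y) = c ^ 2 • (yᴴ * y)) (htr : (yᴴ * y).trace = r * c ^ 2) :
    schattenNorm q y = r ^ (1 / q) * c := by
  set hH := isHermitian_conjTranspose_mul_self y
  have hsum : ∑ i, hH.eigenvalues i = r * c ^ 2 := by
    apply Complex.ofReal_injective
    push_cast
    exact hH.trace_eq_sum_eigenvalues.symm.trans htr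
  have hterm i : √(hH.eigenvalues i) ^ q = hH.eigenvalues i / c ^ 2 * c ^ q :=
    Real.sqrt_rpow_eq_of_mul_self_eq hq hc (hH.eigenvalues_mul_self_eq hsq i)
  rw [schattenNorm, Finset.sum_congr rfl fun i _ => hterm i, ← Finset.sum_mul, ← Finset.sum_div,
    hsum, mul_div_cancel_right₀ _ (by positivity), Real.mul_rpow (by positivity) (by positivity),
    ← Real.rpow_mul hc.le, mul_one_div_cancel hq, Real.rpow_one]

theorem exists_nat_mul_lt_rpow_one_div {q : ℝ} (hq0 : 0 < q) (hq1 : q < 1) (C : ℝ) :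
    ∃ n : ℕ, 0 < n ∧ C * n < (n : ℝ) ^ (1 / q) := by
  have hgrowth : Filter.Tendsto (fun n : ℕ => (n : ℝ) ^ (1 / q - 1)) .atTop .atTop :=
    (tendsto_rpow_atTop (by rw [sub_pos, lt_one_div one_pos hq0, div_one]; exact hq1)).comp
      tendsto_natCast_atTop_atTop
  obtain ⟨n, hCn, hn⟩ := ((hgrowth.eventually_gt_atTop C).and (Filter.eventually_gt_atTop 0)).exists
  have hn' : (0 : ℝ) < n := Nat.cast_pos.2 hn
  refine ⟨n, hn, ?_⟩
  calc C * n < (n : ℝ) ^ (1 / q - 1) * n := mul_lt_mul_of_pos_right hCn hn'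
    _ = (n : ℝ) ^ (1 / q) := by rw [Real.rpow_sub_one hn'.ne', div_mul_cancel₀ _ hn'.ne']

/-- Failure of the diagonal-coefficient estimate for `0 < q < 1`: with
`x_jj = ∑_k e_{jk}` in `M_n`, one has `‖(∑_j x_jj* x_jj)^{1/2}‖_{S_q} = n` while
`(∑_j |(x_jj)_{jj}|^q)^{1/q} = n^{1/q}`; hence for every constant `C` the inequality
`(∑_j |(x_jj)_{jj}|^q)^{1/q} ≤ C ‖(∑_j x_jj* x_jj)^{1/2}‖_{S_q}` fails for some `n`. -/
theorem diagonal_estimate_fails_for_q_lt_one (q : ℝ) (hq0 : 0 < q) (hq1 : q < 1) :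
    ∀ C : ℝ, ∃ (n : ℕ) (x : Fin n → Matrix (Fin n) (Fin n) ℂ)
      (h : (∑ j, (x j)ᴴ * x j).PosSemidef),
      (∀ j, x j = Matrix.of fun a _ => if a = j then 1 else 0) ∧
      schattenNorm q h.sqrt = (n : ℝ) ∧
      (∑ j, ‖x j j j‖ ^ q) ^ (1 / q) = (n : ℝ) ^ (1 / q) ∧
      C * schattenNorm q h.sqrt < (∑ j, ‖x j j j‖ ^ q) ^ (1 / q) := by
  intro C
  obtain ⟨n, hn, hCn⟩ := exists_nat_mul_lt_rpow_one_div hq0 hq1 C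
  have hS : ∑ j, (onesRow j)ᴴ * onesRow j = (of 1 : Matrix (Fin n) (Fin n) ℂ) * of 1 := by
    simp [onesRow_conjTranspose_mul_self, of_one_mul_of_one]
  have h : (∑ j, (onesRow j)ᴴ * onesRow j : Matrix (Fin n) (Fin n) ℂ).PosSemidef :=
    posSemidef_sum _ fun j _ => posSemidef_conjTranspose_mul_self _
  have hsqrt : h.sqrt = of 1 := h.sqrt_eq_of_mul_self posSemidef_of_one hS.symm
  have hnorm : schattenNorm q (of 1 : Matrix (Fin n) (Fin n) ℂ) = n := by
    simpa using schattenNorm_eq_of_conjTranspose_mul_self hq0.ne' (Nat.cast_pos.2 hn) 1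
      (by ext; simp [conjTranspose_of_one, of_one_mul_of_one, mul_apply]; ring)
      (by simp [conjTranspose_of_one, of_one_mul_of_one, trace]; ring)
  have hdiag : ∑ j, ‖(onesRow j : Matrix (Fin n) (Fin n) ℂ) j j‖ ^ q = n := by simp [onesRow]
  refine ⟨n, onesRow, h, fun _ => rfl, hsqrt ▸ hnorm, by rw [hdiag], ?_⟩
  rwa [hsqrt, hnorm, hdiag]
end

section
/- Let M be a finite von Neumann algebra with normalized trace τ (τ(1)=1), and let 0 < p ≤ 2. For t ≥ 0 in M ⊗ N with a trace-preserving conditional expectation E onto M, operator concavity of t ↦ t^{p/2} gives ‖t‖_{p/2} ≤ ‖E(t)‖_{p/2}. Consequently, if (ξ_k) is orthonormal in L^2 of a probability space and S = ∑ ξ_k ⊗ x_k with x_k ∈ L^p(τ), then ‖S‖_p ≤ ‖(∑ x_k* x_k)^{1/2}‖_p and ‖S‖_p ≤ ‖(∑ x_k x_k*)^{1/2}‖_p. In the matrix case: for x_k ∈ M_n and independent signs ε_k, (E‖∑ ε_k x_k‖_{S_p}^p)^{1/p} ≤ min{‖(∑ x_k*x_k)^{1/2}‖_{S_p}, ‖(∑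 x_k x_k*)^{1/2}‖_{S_p}}. -/
/-!
For `0 < p ≤ 2` we have `‖y‖ₚᵖ = ∑ᵢ λᵢ(yᴴ y)^{p/2}` with `t ↦ t^{p/2}` concave on `[0, ∞)`, and,
the signs being orthonormal, the average of `yᴴ y` over the signs for `y = ∑ₖ εₖ xₖ` is
`∑ₖ xₖᴴ xₖ`. So the column bound follows from the concavity of `A ↦ tr f(A)` for concave `f`,
in the form `∑ₛ wₛ tr f(Aₛ) ≤ tr f(∑ₛ wₛ Aₛ)`: after diagonalizing `C = ∑ₛ wₛ Aₛ` by a unitary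
`U`, Peierls' inequality bounds `tr f(Aₛ)` by `∑ᵢ f((U⋆ Aₛ U)ᵢᵢ)`, and scalar Jensen in each
diagonal entry finishes. Peierls' inequality is itself scalar Jensen for the doubly stochastic
matrix `(|Vᵢⱼ|²)` built from the eigenvectors of `A`. The row bound is the column bound for the
family `(xₖᴴ)`, since `‖yᴴ‖ₚ = ‖y‖ₚ`.
-/

open Matrix
open scoped ComplexOrder

namespace Matrix

variable {𝕜 : Type*} [RCLike 𝕜] {n : Type*} [Fintype n] [DecidableEq n]

lemma sum_norm_sq_row_eq_one_of_mem_unitaryGroup {U : Matrix n n 𝕜}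
    (hU : U ∈ unitaryGroup n 𝕜) (i : n) : ∑ j, ‖U i j‖ ^ 2 = 1 := by
  have h := congrArg (fun M : Matrix n n 𝕜 => RCLike.re (M i i)) (mem_unitaryGroup_iff.mp hU)
  simp only [mul_apply, star_apply, RCLike.star_def, RCLike.mul_conj, one_apply_eq,
    RCLike.one_re] at h
  exact_mod_cast h

lemma sum_norm_sq_col_eq_one_of_mem_unitaryGroup {U : Matrix n n 𝕜}
    (hU : U ∈ unitaryGroup n 𝕜) (j : n) : ∑ i, ‖U i j‖ ^ 2 = 1 := by
  simpa [star_apply] using sum_norm_sq_row_eq_one_of_mem_unitaryGroup (Unitary.star_mem hU) j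

lemma IsHermitian.re_diag_eq_sum_norm_sq_mul_eigenvalues {A : Matrix n n 𝕜}
    (hA : A.IsHermitian) (i : n) :
    RCLike.re (A i i) =
      ∑ j, ‖(hA.eigenvectorUnitary : Matrix n n 𝕜) i j‖ ^ 2 * hA.eigenvalues j := by
  conv_lhs => rw [hA.spectral_theorem, Unitary.conjStarAlgAut_apply]
  rw [mul_apply, map_sum]
  simp only [mul_diagonal, star_apply, RCLike.star_def, Function.comp_apply]
  refine Finset.sum_congr rfl fun j _ => ?_
  rw [mul_right_comm, RCLike.mul_conj]
  norm_cast

/-- Peierls' inequality. -/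
lemma PosSemidef.sum_eigenvalues_le_sum_diag_of_concaveOn {A : Matrix n n 𝕜}
    (hA : A.PosSemidef) {f : ℝ → ℝ} (hf : ConcaveOn ℝ (Set.Ici 0) f) :
    ∑ i, f (hA.1.eigenvalues i) ≤ ∑ i, f (RCLike.re (A i i)) := by
  set U := hA.1.eigenvectorUnitary
  calc ∑ j, f (hA.1.eigenvalues j)
      = ∑ i, ∑ j, ‖(U : Matrix n n 𝕜) i j‖ ^ 2 * f (hA.1.eigenvalues j) := by
        rw [Finset.sum_comm]
        simp only [← Finset.sum_mul, sum_norm_sq_col_eq_one_of_mem_unitaryGroup U.2, one_mul]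
    _ ≤ ∑ i, f (∑ j, ‖(U : Matrix n n 𝕜) i j‖ ^ 2 * hA.1.eigenvalues j) :=
        Finset.sum_le_sum fun i _ => by
          simpa only [smul_eq_mul] using hf.le_map_sum (fun j _ => by positivity)
            (sum_norm_sq_row_eq_one_of_mem_unitaryGroup U.2 i)
            (fun j _ => hA.eigenvalues_nonneg j)
    _ = ∑ i, f (RCLike.re (A i i)) := by
        simp only [hA.1.re_diag_eq_sum_norm_sq_mul_eigenvalues, U]

lemma IsHermitian.eigenvalues_unitary_conj {A : Matrix n n 𝕜} (hA : A.IsHermitian)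
    (U : unitaryGroup n 𝕜) (hB : (star (U : Matrix n n 𝕜) * A * U).IsHermitian) :
    hB.eigenvalues = hA.eigenvalues := by
  rw [hB.eigenvalues_eq_eigenvalues_iff hA, Matrix.mul_assoc, charpoly_mul_comm,
    Matrix.mul_assoc, mem_unitaryGroup_iff.mp U.2, Matrix.mul_one]

lemma IsHermitian.re_star_eigenvectorUnitary_mul_mul_apply {A : Matrix n n 𝕜}
    (hA : A.IsHermitian) (i : n) :
    RCLike.re ((star (hA.eigenvectorUnitary : Matrix n n 𝕜) * A * hA.eigenvectorUnitary) i i) =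
      hA.eigenvalues i := by
  have h := hA.conjStarAlgAut_star_eigenvectorUnitary
  simp only [Unitary.conjStarAlgAut_apply, Unitary.coe_star, star_star] at h
  simp [h]

lemma PosSemidef.sum_mul_sum_eigenvalues_le_of_concaveOn {ι : Type*} [Fintype ι]
    {w : ι → ℝ} (hw0 : ∀ s, 0 ≤ w s) (hw1 : ∑ s, w s = 1)
    {A : ι → Matrix n n 𝕜} (hA : ∀ s, (A s).PosSemidef)
    {C : Matrix n n 𝕜} (hC : C.PosSemidef) (hAC : ∑ s, w s • A s = C)
    {f : ℝ → ℝ} (hf : ConcaveOn ℝ (Set.Ici 0) f) :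
    ∑ s, w s * ∑ i, f ((hA s).1.eigenvalues i) ≤ ∑ i, f (hC.1.eigenvalues i) := by
  subst hAC
  set U := hC.1.eigenvectorUnitary
  have hB : ∀ s, (star (U : Matrix n n 𝕜) * A s * U).PosSemidef := fun s => by
    simpa only [star_eq_conjTranspose] using (hA s).conjTranspose_mul_mul_same (U : Matrix n n 𝕜)
  have hdiag : ∀ i, ∑ s, w s * RCLike.re ((star (U : Matrix n n 𝕜) * A s * U) i i) =
      hC.1.eigenvalues i := fun i => by
    rw [← hC.1.re_star_eigenvectorUnitary_mul_mul_apply, Matrix.mul_sum, Matrix.sum_mul,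
      sum_apply, map_sum]
    simp only [Matrix.mul_smul, Matrix.smul_mul, smul_apply, RCLike.smul_re]
    rfl
  calc ∑ s, w s * ∑ i, f ((hA s).1.eigenvalues i)
      = ∑ s, w s * ∑ i, f ((hB s).1.eigenvalues i) := by
        simp only [(hA _).1.eigenvalues_unitary_conj U]
    _ ≤ ∑ s, w s * ∑ i, f (RCLike.re ((star (U : Matrix n n 𝕜) * A s * U) i i)) :=
        Finset.sum_le_sum fun s _ => mul_le_mul_of_nonneg_left
          ((hB s).sum_eigenvalues_le_sum_diag_of_concaveOn hf) (hw0 s)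
    _ = ∑ i, ∑ s, w s * f (RCLike.re ((star (U : Matrix n n 𝕜) * A s * U) i i)) := by
        simp only [Finset.mul_sum]
        exact Finset.sum_comm
    _ ≤ ∑ i, f (hC.1.eigenvalues i) :=
        Finset.sum_le_sum fun i _ => by
          simpa only [smul_eq_mul, hdiag] using hf.le_map_sum (fun s _ => hw0 s) hw1
            (fun s _ => (RCLike.nonneg_iff.mp ((hB s).diag_nonneg (i := i))).1)

open scoped MatrixOrder in
lemma PosSemidef.conjTranspose_cfc_sqrt_mul_self {C : Matrix n n 𝕜} (hC : C.PosSemidef) :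
    (hC.1.cfc Real.sqrt)ᴴ * hC.1.cfc Real.sqrt = C := by
  rw [← IsHermitian.cfc_eq, ← cfcₙ_eq_cfc (hf0 := Real.sqrt_zero),
    ← CFC.sqrt_eq_real_sqrt C hC.nonneg, ← star_eq_conjTranspose,
    (CFC.sqrt_nonneg C).isSelfAdjoint.star_eq, CFC.sqrt_mul_sqrt_self C hC.nonneg]

end Matrix

section Rademacher

variable {ι : Type*} [Fintype ι]

lemma radSign_mul_self (b : Bool) : radSign b * radSign b = 1 := by cases b <;> simp [radSign]

lemma radSign_not (b : Bool) : radSign (!b) = -radSign b := by cases b <;> simp [radSign]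

lemma sum_radSign_mul_radSign [DecidableEq ι] (k l : ι) :
    ∑ s : ι → Bool, radSign (s k) * radSign (s l) =
      if k = l then (2 ^ Fintype.card ι : ℝ) else 0 := by
  split_ifs with hkl
  · simp [hkl, radSign_mul_self]
  -- flipping the `k`-th sign is a fixed-point-free involution reversing the sign of each term
  refine Finset.sum_ninvolution (fun s => Function.update s k (!(s k))) (fun s => ?_)
    (fun s _ hs => ?_) (fun _ => Finset.mem_univ _) (fun s => by simp)
  · rw [Function.update_self, Function.update_of_ne (Ne.symm hkl), radSign_not]
    ring
  · simpa using congrFun hs k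

def rademacherSum {A : Type*} [AddCommGroup A] [Module ℝ A] (x : ι → A) (s : ι → Bool) : A :=
  ∑ k, radSign (s k) • x k

lemma sum_rademacherSum_mul_rademacherSum [DecidableEq ι] {A : Type*} [NonUnitalNonAssocRing A] [Module ℝ A]
    [IsScalarTower ℝ A A] [SMulCommClass ℝ A A] (x y : ι → A) :
    ∑ s, rademacherSum x s * rademacherSum y s = (2 ^ Fintype.card ι : ℝ) • ∑ k, x k * y k := by
  simp only [rademacherSum, Finset.sum_mul_sum, smul_mul_smul_comm]
  rw [Finset.sum_comm]
  simp only [Finset.smul_sum]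
  refine Finset.sum_congr rfl fun k _ => ?_
  rw [Finset.sum_comm]
  simp [← Finset.sum_smul, sum_radSign_mul_radSign]

lemma conjTranspose_rademacherSum {𝕜 m n : Type*} [RCLike 𝕜] (x : ι → Matrix m n 𝕜)
    (s : ι → Bool) : (rademacherSum x s)ᴴ = rademacherSum (fun k => (x k)ᴴ) s := by
  simp [rademacherSum, conjTranspose_sum, conjTranspose_smul]

end Rademacher

section Schatten

variable {n : ℕ} {p : ℝ}

lemma schattenNorm_nonneg (y : Matrix (Fin n) (Fin n) ℂ) : 0 ≤ schattenNorm p y :=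
  Real.rpow_nonneg (Finset.sum_nonneg fun _ _ => Real.rpow_nonneg (Real.sqrt_nonneg _) _) _

lemma schattenNorm_rpow (hp : p ≠ 0) (y : Matrix (Fin n) (Fin n) ℂ) :
    schattenNorm p y ^ p =
      ∑ i, (isHermitian_conjTranspose_mul_self y).eigenvalues i ^ (p / 2) := by
  rw [schattenNorm, ← Real.rpow_mul
    (Finset.sum_nonneg fun _ _ => Real.rpow_nonneg (Real.sqrt_nonneg _) _), one_div_mul_cancel hp,
    Real.rpow_one]
  refine Finset.sum_congr rfl fun i _ => ?_
  rw [Real.sqrt_eq_rpow, ← Real.rpow_mul (eigenvalues_conjTranspose_mul_self_nonneg y i),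
    one_div_mul_eq_div]

lemma schattenNorm_conjTranspose (y : Matrix (Fin n) (Fin n) ℂ) :
    schattenNorm p yᴴ = schattenNorm p y := by
  have h : (isHermitian_conjTranspose_mul_self yᴴ).eigenvalues =
      (isHermitian_conjTranspose_mul_self y).eigenvalues := by
    rw [IsHermitian.eigenvalues_eq_eigenvalues_iff, conjTranspose_conjTranspose, charpoly_mul_comm]
  rw [schattenNorm, schattenNorm, h]

lemma Matrix.PosSemidef.schattenNorm_cfc_sqrt_rpow (hp : p ≠ 0) {C : Matrix (Fin n) (Fin n) ℂ}
    (hC : C.PosSemidef) :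
    schattenNorm p (hC.1.cfc Real.sqrt) ^ p = ∑ i, hC.1.eigenvalues i ^ (p / 2) := by
  rw [schattenNorm_rpow hp, ((isHermitian_conjTranspose_mul_self _).eigenvalues_eq_eigenvalues_iff
    hC.1).mpr (by rw [hC.conjTranspose_cfc_sqrt_mul_self])]

variable {ι : Type*} [Fintype ι] {w : ι → ℝ} {y : ι → Matrix (Fin n) (Fin n) ℂ}
  {C : Matrix (Fin n) (Fin n) ℂ}

lemma Matrix.PosSemidef.sum_mul_schattenNorm_rpow_le_col (hw0 : ∀ s, 0 ≤ w s)
    (hw1 : ∑ s, w s = 1) (hp0 : 0 < p) (hp2 : p ≤ 2) (hC : C.PosSemidef)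
    (hyC : ∑ s, w s • ((y s)ᴴ * y s) = C) :
    ∑ s, w s * schattenNorm p (y s) ^ p ≤ schattenNorm p (hC.1.cfc Real.sqrt) ^ p := by
  rw [hC.schattenNorm_cfc_sqrt_rpow hp0.ne']
  simp only [schattenNorm_rpow hp0.ne']
  exact PosSemidef.sum_mul_sum_eigenvalues_le_of_concaveOn hw0 hw1
    (fun s => posSemidef_conjTranspose_mul_self (y s)) hC hyC
    (Real.concaveOn_rpow (by linarith) (by linarith))

lemma Matrix.PosSemidef.sum_mul_schattenNorm_rpow_le_row (hw0 : ∀ s, 0 ≤ w s)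
    (hw1 : ∑ s, w s = 1) (hp0 : 0 < p) (hp2 : p ≤ 2) (hC : C.PosSemidef)
    (hyC : ∑ s, w s • (y s * (y s)ᴴ) = C) :
    ∑ s, w s * schattenNorm p (y s) ^ p ≤ schattenNorm p (hC.1.cfc Real.sqrt) ^ p := by
  simpa only [schattenNorm_conjTranspose] using
    hC.sum_mul_schattenNorm_rpow_le_col (y := fun s => (y s)ᴴ) hw0 hw1 hp0 hp2
      (by simpa only [conjTranspose_conjTranspose] using hyC)

end Schatten

/-- The easy ("converse") direction of the non-commutative Khintchine inequality for
`0 < p ≤ 2`, matrix case: for `x_k ∈ M_n` and independent uniform signs `ε_k`,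
`(E ‖∑ ε_k x_k‖_{S_p}^p)^{1/p} ≤ min { ‖(∑ x_k* x_k)^{1/2}‖_{S_p}, ‖(∑ x_k x_k*)^{1/2}‖_{S_p} }`.
This follows from the operator concavity of `t ↦ t^{p/2}` applied to the conditional
expectation over the signs. -/
theorem khintchine_upper_bound_matrix
    (p : ℝ) (hp0 : 0 < p) (hp2 : p ≤ 2)
    (m n : ℕ) (x : Fin m → Matrix (Fin n) (Fin n) ℂ)
    (hc : (∑ k, (x k)ᴴ * x k).PosSemidef)
    (hr : (∑ k, x k * (x k)ᴴ).PosSemidef) :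
    ((∑ s : Fin m → Bool, schattenNorm p (∑ k, radSign (s k) • x k) ^ p) / 2 ^ m) ^ (1 / p) ≤
      min (schattenNorm p (hc.1.eigenvectorUnitary.1 * diagonal ((↑) ∘ (√·) ∘ hc.1.eigenvalues) *
        (star hc.1.eigenvectorUnitary : Matrix (Fin n) (Fin n) ℂ)))
        (schattenNorm p (hr.1.eigenvectorUnitary.1 * diagonal ((↑) ∘ (√·) ∘ hr.1.eigenvalues) *
        (star hr.1.eigenvectorUnitary : Matrix (Fin n) (Fin n) ℂ))) := by
  change ((∑ s, schattenNorm p (rademacherSum x s) ^ p) / 2 ^ m) ^ (1 / p) ≤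
    min (schattenNorm p (hc.1.cfc Real.sqrt)) (schattenNorm p (hr.1.cfc Real.sqrt))
  have hw0 : ∀ _ : Fin m → Bool, (0 : ℝ) ≤ 1 / 2 ^ m := fun _ => by positivity
  have hw1 : ∑ _ : Fin m → Bool, (1 / 2 ^ m : ℝ) = 1 := by simp
  have hcol : ∑ s, (1 / 2 ^ m : ℝ) • ((rademacherSum x s)ᴴ * rademacherSum x s) =
      ∑ k, (x k)ᴴ * x k := by
    simp [← Finset.smul_sum, conjTranspose_rademacherSum, sum_rademacherSum_mul_rademacherSum]
  have hrow : ∑ s, (1 / 2 ^ m : ℝ) • (rademacherSum x s * (rademacherSum x s)ᴴ) =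
      ∑ k, x k * (x k)ᴴ := by
    simp [← Finset.smul_sum, conjTranspose_rademacherSum, sum_rademacherSum_mul_rademacherSum]
  have hmean : (∑ s, schattenNorm p (rademacherSum x s) ^ p) / 2 ^ m =
      ∑ s, (1 / 2 ^ m : ℝ) * schattenNorm p (rademacherSum x s) ^ p := by
    rw [Finset.sum_div]
    exact Finset.sum_congr rfl fun _ _ => by ring
  have hmean_nonneg : 0 ≤ (∑ s, schattenNorm p (rademacherSum x s) ^ p) / 2 ^ m :=
    div_nonneg (Finset.sum_nonneg fun _ _ => Real.rpow_nonneg (schattenNorm_nonneg _) _)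
      (by positivity)
  refine le_min ?_ ?_ <;>
    rw [one_div, Real.rpow_inv_le_iff_of_pos hmean_nonneg (schattenNorm_nonneg _) hp0, hmean]
  · exact hc.sum_mul_schattenNorm_rpow_le_col hw0 hw1 hp0 hp2 hcol
  · exact hr.sum_mul_schattenNorm_rpow_le_row hw0 hw1 hp0 hp2 hrow
end

section
/- (Column-only extrapolation data, scalar diagonal case.) Let 0 < p < q ≤ 2, 1/r = 1/p - 1/2, and let f = diag(f_i) be a positive diagonal density with finite spectrum. If T = [T_{ij}] and S_{ij} = f_i^{1/r} T_{ij}, then for 1/q = (1-θ)/p + θ/2 one has, entrywise in Schatten norms: ‖f^{(1-θ)/r} T‖_{S_q} ≤ ‖f^{1/r} T‖_{S_p}^{1-θ} ‖T‖_{S_2}^θ. -/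
/-!
Let `σ(X)` be the singular values of `X` in decreasing order. For an isometry `V` with `k`
columns, Cauchy–Binet writes `det (Vᴴ (f^c T)ᴴ (f^c T) V)` as
`∑_{|S| = k} (∏_{i ∈ S} f i)^{2c} |det (T V)_S|²`, a sum of exponentials in `c`, hence
log-convex in `c` by Hölder. Since `∏_{i<k} σ_i(X)²` is the maximum of these determinants over
isometries `V` (Ky Fan), `∏_{i<k} σ_i(f^c T)` is log-convex in `c` as well, so that
`σ(f^{(1-θ)/r} T)` is weakly log-majorized by `σ(f^{1/r} T)^{1-θ} σ(T)^θ`. Weak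
log-majorization of a decreasing sequence bounds its `ℓ^q` sums (Abel summation on the
logarithms), and Hölder's inequality for the `ℓ^q` sum of `σ(f^{1/r} T)^{1-θ} σ(T)^θ` finishes.
-/

open Matrix
open scoped ComplexOrder

/-- The diagonal matrix with entries `f_i ^ s`. -/
noncomputable def diagPow {n : ℕ} (f : Fin n → ℝ) (s : ℝ) : Matrix (Fin n) (Fin n) ℂ :=
  Matrix.diagonal fun i => ((f i ^ s : ℝ) : ℂ)

open Finset

lemma Real.sum_rpow_mul_rpow_le {ι : Type*} (s : Finset ι) {x y : ι → ℝ}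
    (hx : ∀ i ∈ s, 0 ≤ x i) (hy : ∀ i ∈ s, 0 ≤ y i) {α β : ℝ} (hα : 0 < α) (hβ : 0 < β)
    (hαβ : α + β = 1) :
    ∑ i ∈ s, x i ^ α * y i ^ β ≤ (∑ i ∈ s, x i) ^ α * (∑ i ∈ s, y i) ^ β := by
  have h := inner_le_Lp_mul_Lq_of_nonneg s (Real.HolderConjugate.inv_inv hα hβ hαβ)
    (fun i hi => Real.rpow_nonneg (hx i hi) α) (fun i hi => Real.rpow_nonneg (hy i hi) β)
  simpa only [one_div, inv_inv, sum_congr rfl fun i hi => Real.rpow_rpow_inv (hx i hi) hα.ne',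
    sum_congr rfl fun i hi => Real.rpow_rpow_inv (hy i hi) hβ.ne'] using h

lemma Real.sum_rpow_mul_le_rpow_mul_rpow {σ : Type*} (s : Finset σ) {g w : σ → ℝ}
    (hg : ∀ i ∈ s, 0 < g i) (hw : ∀ i ∈ s, 0 ≤ w i) {a b θ : ℝ} (hθ₀ : 0 < θ) (hθ₁ : θ < 1) :
    ∑ i ∈ s, g i ^ ((1 - θ) * a + θ * b) * w i ≤
      (∑ i ∈ s, g i ^ a * w i) ^ (1 - θ) * (∑ i ∈ s, g i ^ b * w i) ^ θ := by
  have hterm : ∀ i ∈ s, g i ^ ((1 - θ) * a + θ * b) * w i =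
      (g i ^ a * w i) ^ (1 - θ) * (g i ^ b * w i) ^ θ := by
    intro i hi
    have hg' := (hg i hi).le
    rw [Real.mul_rpow (Real.rpow_nonneg hg' _) (hw i hi),
      Real.mul_rpow (Real.rpow_nonneg hg' _) (hw i hi), ← Real.rpow_mul hg', ← Real.rpow_mul hg',
      mul_mul_mul_comm, ← Real.rpow_add (hg i hi), ← Real.rpow_add' (hw i hi) (by simp),
      sub_add_cancel, Real.rpow_one, mul_comm a, mul_comm b]
  rw [sum_congr rfl hterm]
  exact Real.sum_rpow_mul_rpow_le s
    (fun i hi => mul_nonneg (Real.rpow_nonneg (hg i hi).le _) (hw i hi))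
    (fun i hi => mul_nonneg (Real.rpow_nonneg (hg i hi).le _) (hw i hi))
    (sub_pos.2 hθ₁) hθ₀ (sub_add_cancel 1 θ)

lemma sum_mul_nonpos_of_antitone {c x : ℕ → ℝ} (hc_anti : Antitone c) {m : ℕ}
    (hc : ∀ i < m, 0 ≤ c i) (hx : ∀ k ≤ m, ∑ i ∈ range k, x i ≤ 0) :
    ∑ i ∈ range m, c i * x i ≤ 0 := by
  rcases Nat.eq_zero_or_pos m with rfl | hm
  · simp
  have h := sum_range_by_parts c x m
  simp only [smul_eq_mul] at h
  rw [h, sub_nonpos]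
  refine (mul_nonpos_of_nonneg_of_nonpos (hc _ (by omega)) (hx m le_rfl)).trans
    (sum_nonneg fun i hi => mul_nonneg_of_nonpos_of_nonpos ?_ (hx _ ?_))
  · exact sub_nonpos.2 (hc_anti i.le_succ)
  · have := mem_range.1 hi
    omega

lemma sum_le_sum_of_prod_le_prod_of_pos {a d : ℕ → ℝ} (ha_anti : Antitone a) {m : ℕ}
    (ha : ∀ i < m, 0 < a i) (hd : ∀ i < m, 0 < d i)
    (h : ∀ k ≤ m, ∏ i ∈ range k, a i ≤ ∏ i ∈ range k, d i) :
    ∑ i ∈ range m, a i ≤ ∑ i ∈ range m, d i := by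
  -- `log x ≤ x - 1` at `x = d i / a i`
  have hterm : ∀ i ∈ range m, a i - d i ≤ a i * (Real.log (a i) - Real.log (d i)) := by
    intro i hi
    have hai := ha i (mem_range.1 hi)
    have hdi := hd i (mem_range.1 hi)
    have h₁ := Real.log_le_sub_one_of_pos (div_pos hdi hai)
    rw [Real.log_div hdi.ne' hai.ne', le_sub_iff_add_le, le_div_iff₀ hai] at h₁
    linarith
  have hlog : ∀ k ≤ m, ∑ i ∈ range k, (Real.log (a i) - Real.log (d i)) ≤ 0 := by
    intro k hk
    have hne : ∀ f : ℕ → ℝ, (∀ i < m, 0 < f i) → ∀ i ∈ range k, f i ≠ 0 :=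
      fun f hf i hi => (hf i ((mem_range.1 hi).trans_le hk)).ne'
    rw [sum_sub_distrib, ← Real.log_prod (hne a ha), ← Real.log_prod (hne d hd), sub_nonpos]
    exact Real.log_le_log (prod_pos fun i hi => ha i ((mem_range.1 hi).trans_le hk)) (h k hk)
  have := (sum_le_sum hterm).trans
    (sum_mul_nonpos_of_antitone ha_anti (fun i hi => (ha i hi).le) hlog)
  rwa [sum_sub_distrib, sub_nonpos] at this

theorem sum_rpow_le_sum_rpow_of_prod_le_prod {a d : ℕ → ℝ} (ha : ∀ i, 0 ≤ a i)
    (ha_anti : Antitone a) (hd : ∀ i, 0 ≤ d i) {t : ℝ} (ht : 0 < t) {m : ℕ}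
    (h : ∀ k ≤ m, ∏ i ∈ range k, a i ≤ ∏ i ∈ range k, d i) :
    ∑ i ∈ range m, a i ^ t ≤ ∑ i ∈ range m, d i ^ t := by
  induction m with
  | zero => simp
  | succ m ih =>
    rcases (ha m).eq_or_lt with ham | ham
    · rw [sum_range_succ, sum_range_succ, ← ham, Real.zero_rpow ht.ne', add_zero]
      exact (ih fun k hk => h k (hk.trans m.le_succ)).trans
        (le_add_of_nonneg_right (Real.rpow_nonneg (hd m) t))
    · have ha_pos : ∀ i < m + 1, 0 < a i := fun i hi => ham.trans_le (ha_anti (by omega))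
      have hd_pos : ∀ i < m + 1, 0 < d i := by
        intro i hi
        refine (hd i).lt_of_ne fun hdi => ?_
        have := h (i + 1) hi
        rw [prod_range_succ, prod_range_succ, ← hdi, mul_zero] at this
        exact this.not_gt (mul_pos (prod_pos fun j hj => ha_pos j (by
          have := mem_range.1 hj; omega)) (ha_pos i (by omega)))
      refine sum_le_sum_of_prod_le_prod_of_pos (fun i j hij => ?_)
        (fun i hi => Real.rpow_pos_of_pos (ha_pos i hi) t)
        (fun i hi => Real.rpow_pos_of_pos (hd_pos i hi) t) fun k hk => ?_
      · exact Real.rpow_le_rpow (ha j) (ha_anti hij) ht.le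
      · rw [Real.finsetProd_rpow _ _ (fun i _ => ha i), Real.finsetProd_rpow _ _ (fun i _ => hd i)]
        exact Real.rpow_le_rpow (prod_nonneg fun i _ => ha i) (h k hk) ht.le

theorem rpow_sum_rpow_le_of_prod_le_prod_rpow_mul_rpow {a b c : ℕ → ℝ} (ha : ∀ i, 0 ≤ a i)
    (ha_anti : Antitone a) (hb : ∀ i, 0 ≤ b i) (hc : ∀ i, 0 ≤ c i) {p q s θ : ℝ}
    (hp : 0 < p) (hs : 0 < s) (hθ₀ : 0 < θ) (hθ₁ : θ < 1)
    (hpqs : 1 / q = (1 - θ) / p + θ / s) {m : ℕ}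
    (h : ∀ k ≤ m, ∏ i ∈ range k, a i ≤ (∏ i ∈ range k, b i) ^ (1 - θ) * (∏ i ∈ range k, c i) ^ θ) :
    (∑ i ∈ range m, a i ^ q) ^ (1 / q) ≤
      ((∑ i ∈ range m, b i ^ p) ^ (1 / p)) ^ (1 - θ) *
        ((∑ i ∈ range m, c i ^ s) ^ (1 / s)) ^ θ := by
  have hq : 0 < q := one_div_pos.1 (hpqs ▸ by positivity)
  set α := (1 - θ) * q / p
  set β := θ * q / s
  have hαβ : α + β = 1 := by
    calc α + β = q * ((1 - θ) / p + θ / s) := by ring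
      _ = 1 := by rw [← hpqs]; field_simp
  have hbc : ∀ i, (b i ^ (1 - θ) * c i ^ θ) ^ q = (b i ^ p) ^ α * (c i ^ s) ^ β := by
    intro i
    rw [Real.mul_rpow (Real.rpow_nonneg (hb i) _) (Real.rpow_nonneg (hc i) _),
      ← Real.rpow_mul (hb i), ← Real.rpow_mul (hb i), ← Real.rpow_mul (hc i),
      ← Real.rpow_mul (hc i)]
    congr 2 <;> simp only [α, β] <;> field_simp
  have hmaj : ∑ i ∈ range m, a i ^ q ≤ ∑ i ∈ range m, (b i ^ (1 - θ) * c i ^ θ) ^ q := by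
    refine sum_rpow_le_sum_rpow_of_prod_le_prod ha ha_anti
      (fun i => mul_nonneg (Real.rpow_nonneg (hb i) _) (Real.rpow_nonneg (hc i) _)) hq
      fun k hk => ?_
    rw [prod_mul_distrib, Real.finsetProd_rpow _ _ (fun i _ => hb i),
      Real.finsetProd_rpow _ _ (fun i _ => hc i)]
    exact h k hk
  have hholder := Real.sum_rpow_mul_rpow_le (range m) (x := fun i => b i ^ p)
    (y := fun i => c i ^ s) (fun i _ => Real.rpow_nonneg (hb i) _)
    (fun i _ => Real.rpow_nonneg (hc i) _) (by positivity) (by positivity) hαβ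
  have hB : 0 ≤ ∑ i ∈ range m, b i ^ p := sum_nonneg fun i _ => Real.rpow_nonneg (hb i) _
  have hC : 0 ≤ ∑ i ∈ range m, c i ^ s := sum_nonneg fun i _ => Real.rpow_nonneg (hc i) _
  calc (∑ i ∈ range m, a i ^ q) ^ (1 / q)
      ≤ ((∑ i ∈ range m, b i ^ p) ^ α * (∑ i ∈ range m, c i ^ s) ^ β) ^ (1 / q) := by
        refine Real.rpow_le_rpow (sum_nonneg fun i _ => Real.rpow_nonneg (ha i) _) ?_
          (by positivity)
        exact (hmaj.trans_eq (sum_congr rfl fun i _ => hbc i)).trans hholder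
    _ = _ := by
        rw [Real.mul_rpow (Real.rpow_nonneg hB _) (Real.rpow_nonneg hC _), ← Real.rpow_mul hB,
          ← Real.rpow_mul hC, ← Real.rpow_mul hB, ← Real.rpow_mul hC]
        congr 2 <;> simp only [α, β] <;> field_simp

lemma det_mul_eq_sum_prod_mul_det_submatrix {R m : Type*} [CommRing R] [Fintype m] {k : ℕ}
    (A : Matrix (Fin k) m R) (B : Matrix m (Fin k) R) :
    det (A * B) = ∑ p : Fin k → m, (∏ i, A i (p i)) * det (B.submatrix p id) := by
  classical
  have hrows : A * B = fun i => ∑ l, A i l • B l := by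
    ext i j
    simp [mul_apply, Finset.sum_apply]
  rw [det, hrows, ← AlternatingMap.coe_multilinearMap, MultilinearMap.map_sum]
  refine sum_congr rfl fun p _ => ?_
  rw [MultilinearMap.map_smul_univ, smul_eq_mul]
  rfl

section CauchyBinet

variable {R : Type*} [CommRing R] {m : Type*} [LinearOrder m] {k : ℕ}

abbrev KSubset (m : Type*) (k : ℕ) := {s : Finset m // s.card = k}

noncomputable def KSubset.emb (S : KSubset m k) : Fin k ↪o m := S.1.orderEmbOfFin S.2

lemma KSubset.image_emb (S : KSubset m k) : univ.image S.emb = S.1 :=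
  image_orderEmbOfFin_univ _ _

lemma KSubset.image_emb_comp (S : KSubset m k) (τ : Equiv.Perm (Fin k)) :
    univ.image (S.emb ∘ τ) = S.1 := by
  rw [← image_image, image_univ_equiv, S.image_emb]

lemma KSubset.exists_emb_comp_eq (p : Fin k → m) (hp : Function.Injective p) :
    ∃ (S : KSubset m k) (τ : Equiv.Perm (Fin k)), S.emb ∘ τ = p := by
  let S : KSubset m k := ⟨univ.image p, by rw [card_image_of_injective _ hp, card_fin]⟩
  have hsorted : StrictMono (p ∘ Tuple.sort p) :=
    (Tuple.monotone_sort p).strictMono_of_injective (hp.comp (Tuple.sort p).injective)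
  have hemb : p ∘ Tuple.sort p = S.emb :=
    orderEmbOfFin_unique S.2 (fun x => mem_image_of_mem p (mem_univ _)) hsorted
  refine ⟨S, (Tuple.sort p)⁻¹, ?_⟩
  rw [← hemb, Function.comp_assoc, ← Equiv.Perm.coe_mul, mul_inv_cancel, Equiv.Perm.coe_one,
    Function.comp_id]

/-- **Cauchy–Binet formula**. -/
theorem det_mul_eq_sum_det_submatrix_mul_det_submatrix [Fintype m]
    (A : Matrix (Fin k) m R) (B : Matrix m (Fin k) R) :
    det (A * B) = ∑ S : KSubset m k,
      det (A.submatrix id S.emb) * det (B.submatrix S.emb id) := by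
  classical
  have hinj : ∑ p : Fin k → m, (∏ i, A i (p i)) * det (B.submatrix p id) =
      ∑ p ∈ univ.filter Function.Injective, (∏ i, A i (p i)) * det (B.submatrix p id) := by
    refine (sum_subset (filter_subset _ _) fun p _ hp => ?_).symm
    obtain ⟨i, j, hij, hne⟩ : ∃ i j, p i = p j ∧ i ≠ j := by
      simpa [Function.Injective, and_comm] using hp
    rw [det_zero_of_row_eq hne (by ext; simp [hij]), mul_zero]
  have hfactor : ∑ x : KSubset m k × Equiv.Perm (Fin k),
      (∏ i, A i (x.1.emb (x.2 i))) * det (B.submatrix (x.1.emb ∘ x.2) id) =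
      ∑ p ∈ univ.filter Function.Injective, (∏ i, A i (p i)) * det (B.submatrix p id) := by
    refine sum_bij (fun x _ => x.1.emb ∘ x.2) (fun x _ => ?_) (fun x _ y _ h => ?_)
      (fun p hp => ?_) (fun _ _ => rfl)
    · simpa using x.1.emb.injective.comp x.2.injective
    · have hS : x.1 = y.1 := Subtype.ext <| by
        rw [← x.1.image_emb_comp x.2, ← y.1.image_emb_comp y.2, h]
      refine Prod.ext hS (Equiv.ext fun i => x.1.emb.injective ?_)
      simpa [hS] using congrFun h i
    · obtain ⟨S, τ, rfl⟩ := KSubset.exists_emb_comp_eq p (by simpa using hp)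
      exact ⟨(S, τ), mem_univ _, rfl⟩
  rw [det_mul_eq_sum_prod_mul_det_submatrix, hinj, ← hfactor, Fintype.sum_prod_type]
  refine sum_congr rfl fun S _ => ?_
  rw [← det_transpose (A.submatrix id S.emb), det_apply, sum_mul]
  refine sum_congr rfl fun τ _ => ?_
  rw [show B.submatrix (S.emb ∘ τ) id = (B.submatrix S.emb id).submatrix τ id from rfl,
    det_permute, Units.smul_def, zsmul_eq_mul]
  simp only [transpose_apply, submatrix_apply, id]
  ring

lemma KSubset.prod_emb {M : Type*} [CommMonoid M] (S : KSubset m k) (g : m → M) :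
    ∏ j, g (S.emb j) = ∏ i ∈ S.1, g i := by
  rw [← S.image_emb, prod_image fun x _ y _ h => S.emb.injective h]

lemma det_conjTranspose_mul_diagonal_mul [Fintype m] (d : m → ℝ) (M : Matrix m (Fin k) ℂ) :
    det (Mᴴ * diagonal (fun i => (d i : ℂ)) * M) =
      ((∑ S : KSubset m k, (∏ i ∈ S.1, d i) * Complex.normSq (det (M.submatrix S.emb id)) :
        ℝ) : ℂ) := by
  rw [Matrix.mul_assoc, det_mul_eq_sum_det_submatrix_mul_det_submatrix]
  push_cast
  refine sum_congr rfl fun S _ => ?_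
  have hrows : (diagonal (fun i => (d i : ℂ)) * M).submatrix S.emb id =
      diagonal (fun j => (d (S.emb j) : ℂ)) * M.submatrix S.emb id := by
    ext i j
    simp [diagonal_mul]
  rw [hrows, det_mul, det_diagonal, ← conjTranspose_submatrix, det_conjTranspose,
    S.prod_emb (fun i => (d i : ℂ)), Complex.normSq_eq_conj_mul_self, Complex.star_def]
  ring

end CauchyBinet

lemma Fin.val_le_of_strictMono {k N : ℕ} {f : Fin k → Fin N} (hf : StrictMono f) (j : Fin k) :
    (j : ℕ) ≤ f j := by
  simpa using card_le_card_of_injOn f (s := Iio j) (t := Iio (f j))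
    (fun i hi => by simpa using hf (mem_Iio.1 hi)) hf.injective.injOn

namespace Matrix

variable {ι : Type*} [Fintype ι] [DecidableEq ι] {A : Matrix ι ι ℂ}

namespace IsHermitian

/-- `hA.eigenvalues` is `eigenvalues₀` read through an arbitrary bijection
`Fin (card ι) ≃ ι`, so it is not sorted even when `ι = Fin n`. -/
noncomputable def sortedEigenvalues (hA : A.IsHermitian) (i : ℕ) : ℝ :=
  if h : i < Fintype.card ι then hA.eigenvalues₀ ⟨i, h⟩ else 0

lemma exists_sorted_diagonalization (hA : A.IsHermitian) :
    ∃ U : Matrix ι (Fin (Fintype.card ι)) ℂ, Uᴴ * U = 1 ∧ U * Uᴴ = 1 ∧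
      A = U * diagonal (fun j => (hA.eigenvalues₀ j : ℂ)) * Uᴴ := by
  set e : Fin (Fintype.card ι) ≃ ι := Fintype.equivOfCardEq (Fintype.card_fin _)
  set V : Matrix ι ι ℂ := (hA.eigenvectorUnitary : Matrix ι ι ℂ)
  have hV : Vᴴ * V = 1 := Unitary.coe_star_mul_self hA.eigenvectorUnitary
  have hV' : V * Vᴴ = 1 := Unitary.coe_mul_star_self hA.eigenvectorUnitary
  have hD : diagonal (fun j => (hA.eigenvalues₀ j : ℂ)) =
      (diagonal (RCLike.ofReal ∘ hA.eigenvalues)).submatrix e e := by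
    rw [submatrix_diagonal_equiv]
    congr 1
    ext j
    simp [IsHermitian.eigenvalues, e]
  refine ⟨V.submatrix id e, ?_, ?_, ?_⟩
  · rw [conjTranspose_submatrix, ← submatrix_mul _ _ _ _ _ Function.bijective_id, hV,
      submatrix_one_equiv]
  · rw [conjTranspose_submatrix, submatrix_mul_equiv, submatrix_id_id, hV']
  · rw [hD, conjTranspose_submatrix, submatrix_mul_equiv, submatrix_mul_equiv, submatrix_id_id]
    exact hA.spectral_theorem

lemma prod_range_sortedEigenvalues (hA : A.IsHermitian) {k : ℕ} (hk : k ≤ Fintype.card ι) :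
    ∏ i ∈ range k, hA.sortedEigenvalues i = ∏ j : Fin k, hA.eigenvalues₀ (Fin.castLE hk j) := by
  rw [← Fin.prod_univ_eq_prod_range]
  refine prod_congr rfl fun j _ => ?_
  rw [sortedEigenvalues, dif_pos (j.2.trans_le hk)]
  rfl

theorem exists_det_conjTranspose_mul_mul_eq (hA : A.IsHermitian) {k : ℕ}
    (hk : k ≤ Fintype.card ι) :
    ∃ V : Matrix ι (Fin k) ℂ, Vᴴ * V = 1 ∧
      det (Vᴴ * A * V) = ((∏ i ∈ range k, hA.sortedEigenvalues i : ℝ) : ℂ) := by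
  obtain ⟨U, hUU, -, hA_eq⟩ := hA.exists_sorted_diagonalization
  have hinj : Function.Injective (Fin.castLE hk) := Fin.castLE_injective hk
  refine ⟨U.submatrix id (Fin.castLE hk), ?_, ?_⟩
  · rw [conjTranspose_submatrix, ← submatrix_mul _ _ _ _ _ Function.bijective_id, hUU,
      submatrix_one _ hinj]
  · have hdiag : Uᴴ * A * U = diagonal (fun j => (hA.eigenvalues₀ j : ℂ)) := by
      conv_lhs => rw [hA_eq]
      rw [Matrix.mul_assoc, Matrix.mul_assoc, hUU, Matrix.mul_one, ← Matrix.mul_assoc,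
        hUU, Matrix.one_mul]
    conv_lhs => rw [conjTranspose_submatrix, ← submatrix_id_id A,
      ← submatrix_mul _ _ _ _ _ Function.bijective_id,
      ← submatrix_mul _ _ _ _ _ Function.bijective_id, hdiag,
      submatrix_diagonal _ _ hinj, det_diagonal]
    rw [hA.prod_range_sortedEigenvalues hk]
    push_cast
    rfl

lemma sum_comp_eigenvalues (hA : A.IsHermitian) (g : ℝ → ℝ) :
    ∑ i, g (hA.eigenvalues i) = ∑ i ∈ range (Fintype.card ι), g (hA.sortedEigenvalues i) := by
  rw [← Fin.sum_univ_eq_sum_range,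
    ← (Fintype.equivOfCardEq (Fintype.card_fin (Fintype.card ι))).sum_comp]
  refine sum_congr rfl fun j _ => ?_
  simp [IsHermitian.eigenvalues, IsHermitian.sortedEigenvalues]

end IsHermitian

namespace PosSemidef

variable (hA : A.PosSemidef)
include hA

lemma eigenvalues₀_nonneg (j : Fin (Fintype.card ι)) : 0 ≤ hA.1.eigenvalues₀ j := by
  simpa [IsHermitian.eigenvalues] using
    hA.eigenvalues_nonneg (Fintype.equivOfCardEq (Fintype.card_fin _) j)

lemma sortedEigenvalues_nonneg (i : ℕ) : 0 ≤ hA.1.sortedEigenvalues i := by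
  unfold IsHermitian.sortedEigenvalues
  split_ifs
  exacts [hA.eigenvalues₀_nonneg _, le_rfl]

lemma sortedEigenvalues_antitone : Antitone hA.1.sortedEigenvalues := by
  intro i j hij
  by_cases hj : j < Fintype.card ι
  · rw [IsHermitian.sortedEigenvalues, IsHermitian.sortedEigenvalues, dif_pos hj,
      dif_pos (hij.trans_lt hj)]
    exact hA.1.eigenvalues₀_antitone hij
  · rw [IsHermitian.sortedEigenvalues, dif_neg hj]
    exact hA.sortedEigenvalues_nonneg i

lemma prod_eigenvalues₀_le {k : ℕ} (S : KSubset (Fin (Fintype.card ι)) k) :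
    ∏ i ∈ S.1, hA.1.eigenvalues₀ i ≤ ∏ i ∈ range k, hA.1.sortedEigenvalues i := by
  have hk : k ≤ Fintype.card ι := by simpa [S.2] using card_le_univ S.1
  rw [← S.prod_emb, hA.1.prod_range_sortedEigenvalues hk]
  exact prod_le_prod (fun j _ => hA.eigenvalues₀_nonneg _) fun j _ =>
    hA.1.eigenvalues₀_antitone (Fin.val_le_of_strictMono S.emb.strictMono j)

/-- With `IsHermitian.exists_det_conjTranspose_mul_mul_eq`, this is Ky Fan's maximum principle:
the product of the `k` largest eigenvalues is the largest `det (Vᴴ A V)` over isometries `V`. -/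
theorem det_conjTranspose_mul_mul_le {k : ℕ} (V : Matrix ι (Fin k) ℂ) (hV : Vᴴ * V = 1) :
    det (Vᴴ * A * V) ≤ ((∏ i ∈ range k, hA.1.sortedEigenvalues i : ℝ) : ℂ) := by
  obtain ⟨U, -, hUU, hA_eq⟩ := hA.1.exists_sorted_diagonalization
  have hW : Vᴴ * A * V =
      (Uᴴ * V)ᴴ * diagonal (fun j => (hA.1.eigenvalues₀ j : ℂ)) * (Uᴴ * V) := by
    conv_lhs => rw [hA_eq]
    rw [conjTranspose_mul, conjTranspose_conjTranspose]
    simp only [Matrix.mul_assoc]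
  have hWW : (Uᴴ * V)ᴴ * (Uᴴ * V) = 1 := by
    rw [conjTranspose_mul, conjTranspose_conjTranspose, Matrix.mul_assoc, ← Matrix.mul_assoc U,
      hUU, Matrix.one_mul, hV]
  -- Cauchy–Binet with the identity in the middle: the weights `‖det (Uᴴ V)_S‖²` sum to one.
  have hweights : ∑ S : KSubset (Fin (Fintype.card ι)) k,
      Complex.normSq (det ((Uᴴ * V).submatrix S.emb id)) = 1 := by
    have h := det_conjTranspose_mul_diagonal_mul (fun _ => 1) (Uᴴ * V)
    simp only [Complex.ofReal_one, diagonal_one, Matrix.mul_one, hWW, det_one, prod_const_one,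
      one_mul] at h
    exact_mod_cast h.symm
  rw [hW, det_conjTranspose_mul_diagonal_mul]
  refine Complex.real_le_real.2 ?_
  calc _ ≤ ∑ S : KSubset (Fin (Fintype.card ι)) k, (∏ i ∈ range k, hA.1.sortedEigenvalues i) *
          Complex.normSq (det ((Uᴴ * V).submatrix S.emb id)) :=
        sum_le_sum fun S _ => mul_le_mul_of_nonneg_right (hA.prod_eigenvalues₀_le S)
          (Complex.normSq_nonneg _)
    _ = ∏ i ∈ range k, hA.1.sortedEigenvalues i := by rw [← mul_sum, hweights, mul_one]

end PosSemidef

noncomputable def singularValues {κ : Type*} [Fintype κ] (X : Matrix κ ι ℂ) (i : ℕ) : ℝ :=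
  √((isHermitian_conjTranspose_mul_self X).sortedEigenvalues i)

lemma singularValues_nonneg {κ : Type*} [Fintype κ] (X : Matrix κ ι ℂ) (i : ℕ) :
    0 ≤ singularValues X i :=
  Real.sqrt_nonneg _

lemma singularValues_antitone {κ : Type*} [Fintype κ] (X : Matrix κ ι ℂ) :
    Antitone (singularValues X) := fun _ _ hij =>
  Real.sqrt_le_sqrt ((posSemidef_conjTranspose_mul_self X).sortedEigenvalues_antitone hij)

lemma sq_prod_range_singularValues {κ : Type*} [Fintype κ] (X : Matrix κ ι ℂ) (k : ℕ) :
    (∏ i ∈ range k, singularValues X i) ^ 2 =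
      ∏ i ∈ range k, (isHermitian_conjTranspose_mul_self X).sortedEigenvalues i := by
  rw [← prod_pow]
  exact prod_congr rfl fun i _ =>
    Real.sq_sqrt ((posSemidef_conjTranspose_mul_self X).sortedEigenvalues_nonneg i)

end Matrix

lemma conjTranspose_diagPow {n : ℕ} (f : Fin n → ℝ) (s : ℝ) : (diagPow f s)ᴴ = diagPow f s := by
  simp [diagPow, diagonal_conjTranspose]

lemma diagPow_zero {n : ℕ} (f : Fin n → ℝ) : diagPow f 0 = 1 := by
  simp [diagPow]

lemma diagPow_mul_diagPow {n : ℕ} {f : Fin n → ℝ} (hf : ∀ i, 0 < f i) (s t : ℝ) :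
    diagPow f s * diagPow f t = diagPow f (s + t) := by
  simp only [diagPow, diagonal_mul_diagonal, ← Complex.ofReal_mul, Real.rpow_add (hf _)]

lemma conjTranspose_mul_diagPow_mul {n : ℕ} {f : Fin n → ℝ} (hf : ∀ i, 0 < f i) (s : ℝ)
    {ι κ : Type*} [Fintype ι] (T : Matrix (Fin n) ι ℂ) (V : Matrix ι κ ℂ) :
    Vᴴ * ((diagPow f s * T)ᴴ * (diagPow f s * T)) * V =
      (T * V)ᴴ * diagPow f (2 * s) * (T * V) := by
  rw [two_mul, ← diagPow_mul_diagPow hf]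
  simp only [conjTranspose_mul, conjTranspose_diagPow, Matrix.mul_assoc]

lemma det_conjTranspose_mul_diagPow_mul {n : ℕ} {f : Fin n → ℝ} (hf : ∀ i, 0 < f i) (s : ℝ)
    {ι : Type*} [Fintype ι] (T : Matrix (Fin n) ι ℂ) {k : ℕ} (V : Matrix ι (Fin k) ℂ) :
    det (Vᴴ * ((diagPow f s * T)ᴴ * (diagPow f s * T)) * V) =
      ((∑ S : KSubset (Fin n) k, (∏ i ∈ S.1, f i) ^ (2 * s) *
        Complex.normSq (det ((T * V).submatrix S.emb id)) : ℝ) : ℂ) := by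
  simp only [← Real.finsetProd_rpow _ _ fun i _ => (hf i).le]
  rw [conjTranspose_mul_diagPow_mul hf, diagPow, det_conjTranspose_mul_diagonal_mul]

section

variable {ι : Type*} [Fintype ι] [DecidableEq ι]

theorem prod_sortedEigenvalues_diagPow_mul_le {n : ℕ} {f : Fin n → ℝ} (hf : ∀ i, 0 < f i)
    (T : Matrix (Fin n) ι ℂ) {a b θ : ℝ} (hθ₀ : 0 < θ) (hθ₁ : θ < 1) {k : ℕ}
    (hk : k ≤ Fintype.card ι) :
    ∏ i ∈ range k, (isHermitian_conjTranspose_mul_self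
        (diagPow f ((1 - θ) * a + θ * b) * T)).sortedEigenvalues i ≤
      (∏ i ∈ range k, (isHermitian_conjTranspose_mul_self (diagPow f a * T)).sortedEigenvalues i)
          ^ (1 - θ) *
        (∏ i ∈ range k,
          (isHermitian_conjTranspose_mul_self (diagPow f b * T)).sortedEigenvalues i) ^ θ := by
  -- Compress all three matrices by the isometry that is optimal for the interpolated exponent.
  obtain ⟨V, hV, hPV⟩ := (isHermitian_conjTranspose_mul_self
    (diagPow f ((1 - θ) * a + θ * b) * T)).exists_det_conjTranspose_mul_mul_eq hk
  have hbound : ∀ c, ∑ S : KSubset (Fin n) k, (∏ i ∈ S.1, f i) ^ (2 * c) *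
        Complex.normSq (det ((T * V).submatrix S.emb id)) ≤
      ∏ i ∈ range k, (isHermitian_conjTranspose_mul_self (diagPow f c * T)).sortedEigenvalues i :=
    fun c => Complex.real_le_real.1 <| (det_conjTranspose_mul_diagPow_mul hf c T V).symm.trans_le <|
      (posSemidef_conjTranspose_mul_self _).det_conjTranspose_mul_mul_le V hV
  have hP := Complex.ofReal_injective <| hPV.symm.trans (det_conjTranspose_mul_diagPow_mul hf _ T V)
  rw [hP, show 2 * ((1 - θ) * a + θ * b) = (1 - θ) * (2 * a) + θ * (2 * b) by ring]
  refine (Real.sum_rpow_mul_le_rpow_mul_rpow _ (fun S _ => prod_pos fun i _ => hf i)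
    (fun S _ => Complex.normSq_nonneg _) hθ₀ hθ₁).trans ?_
  have hx : ∀ c : ℝ, 0 ≤ ∑ S : KSubset (Fin n) k, (∏ i ∈ S.1, f i) ^ c *
      Complex.normSq (det ((T * V).submatrix S.emb id)) := fun c =>
    sum_nonneg fun S _ => mul_nonneg (Real.rpow_nonneg (prod_pos fun i _ => hf i).le _)
      (Complex.normSq_nonneg _)
  exact mul_le_mul (Real.rpow_le_rpow (hx _) (hbound a) (sub_pos.2 hθ₁).le)
    (Real.rpow_le_rpow (hx _) (hbound b) hθ₀.le) (Real.rpow_nonneg (hx _) _)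
    (Real.rpow_nonneg ((hx _).trans (hbound a)) _)

theorem prod_singularValues_diagPow_mul_le {n : ℕ} {f : Fin n → ℝ} (hf : ∀ i, 0 < f i)
    (T : Matrix (Fin n) ι ℂ) {a b θ : ℝ} (hθ₀ : 0 < θ) (hθ₁ : θ < 1) {k : ℕ}
    (hk : k ≤ Fintype.card ι) :
    ∏ i ∈ range k, singularValues (diagPow f ((1 - θ) * a + θ * b) * T) i ≤
      (∏ i ∈ range k, singularValues (diagPow f a * T) i) ^ (1 - θ) *
        (∏ i ∈ range k, singularValues (diagPow f b * T) i) ^ θ := by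
  have hprod : ∀ X : Matrix (Fin n) ι ℂ, 0 ≤ ∏ i ∈ range k, singularValues X i :=
    fun X => prod_nonneg fun i _ => singularValues_nonneg X i
  rw [← pow_le_pow_iff_left₀ (hprod _)
    (mul_nonneg (Real.rpow_nonneg (hprod _) _) (Real.rpow_nonneg (hprod _) _)) two_ne_zero,
    mul_pow, Real.rpow_pow_comm (hprod _), Real.rpow_pow_comm (hprod _),
    sq_prod_range_singularValues, sq_prod_range_singularValues, sq_prod_range_singularValues]
  exact prod_sortedEigenvalues_diagPow_mul_le hf T hθ₀ hθ₁ hk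

end

lemma schattenNorm_eq_sum_singularValues {n : ℕ} (q : ℝ) (X : Matrix (Fin n) (Fin n) ℂ) :
    schattenNorm q X = (∑ i ∈ range n, singularValues X i ^ q) ^ (1 / q) := by
  rw [schattenNorm, IsHermitian.sum_comp_eigenvalues _ (fun x => √x ^ q), Fintype.card_fin]
  rfl

theorem holder_interpolation_diagonal_general
    (p q r θ : ℝ) (hp0 : 0 < p) (hpq : p < q) (hq2 : q ≤ 2)
    (hθ : 1 / q = (1 - θ) / p + θ / 2)
    (n : ℕ) (f : Fin n → ℝ) (hf : ∀ i, 0 < f i)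
    (T : Matrix (Fin n) (Fin n) ℂ) :
    schattenNorm q (diagPow f ((1 - θ) / r) * T) ≤
      schattenNorm p (diagPow f (1 / r) * T) ^ (1 - θ) * schattenNorm 2 T ^ θ := by
  have hpq' : 1 / q < 1 / p := one_div_lt_one_div_of_lt hp0 hpq
  have hq2' : 1 / 2 ≤ 1 / q := one_div_le_one_div_of_le (hp0.trans hpq) hq2
  have hθ' : θ * (1 / p - 1 / 2) = 1 / p - 1 / q := by rw [hθ]; ring
  have hθ₀ : 0 < θ := by nlinarith
  have hθ₁ : θ ≤ 1 := by nlinarith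
  rcases hθ₁.lt_or_eq with hθ₁ | rfl
  · have hexp : (1 - θ) / r = (1 - θ) * (1 / r) + θ * 0 := by ring
    rw [hexp, schattenNorm_eq_sum_singularValues, schattenNorm_eq_sum_singularValues,
      schattenNorm_eq_sum_singularValues]
    refine rpow_sum_rpow_le_of_prod_le_prod_rpow_mul_rpow (singularValues_nonneg _)
      (singularValues_antitone _) (singularValues_nonneg _) (singularValues_nonneg _) hp0 two_pos
      hθ₀ hθ₁ hθ fun k hk => ?_
    have h := prod_singularValues_diagPow_mul_le hf T (a := 1 / r) (b := 0) hθ₀ hθ₁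
      (hk.trans (Fintype.card_fin n).ge)
    rwa [diagPow_zero, Matrix.one_mul] at h
  · have hq : q = 2 := by simpa using hθ
    rw [sub_self, zero_div, diagPow_zero, Matrix.one_mul, Real.rpow_zero, one_mul, Real.rpow_one,
      hq]

/-- Lemma 1.5 specialized to matrices (column-only extrapolation data): let
`0 < p < q ≤ 2`, `1/r = 1/p - 1/2`, `1/q = (1-θ)/p + θ/2`, and let `f` be a positive
diagonal density. Then
`‖f^{(1-θ)/r} T‖_{S_q} ≤ ‖f^{1/r} T‖_{S_p}^{1-θ} ‖T‖_{S_2}^θ`. -/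
theorem holder_interpolation_diagonal
    (p q r θ : ℝ) (hp0 : 0 < p) (hpq : p < q) (hq2 : q ≤ 2)
    (hr : 1 / r = 1 / p - 1 / 2) (hθ : 1 / q = (1 - θ) / p + θ / 2)
    (n : ℕ) (f : Fin n → ℝ) (hf : ∀ i, 0 < f i)
    (T : Matrix (Fin n) (Fin n) ℂ) :
    schattenNorm q (diagPow f ((1 - θ) / r) * T) ≤
      schattenNorm p (diagPow f (1 / r) * T) ^ (1 - θ) * schattenNorm 2 T ^ θ :=
  holder_interpolation_diagonal_general p q r θ hp0 hpq hq2 hθ n f hf T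
end
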